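/- arXiv:1508.03062 — 4 statements merged into one kernel-verified Lean document; each statement's English description precedes it below -/
import Mathlib

section
/- Let G be a (pan, even hole)-free graph, B an odd ℓ-buoy in G (ℓ ≥ 5), and x a vertex outside B having neighbors in exactly two bags, B_i and B_{i+1}. Then {x} ∪ B_i ∪ B_{i+1} induces a clique in G. -/
def IsHole {V : Type*} (G : SimpleGraph V) (n : ℕ) (f : ZMod n → V) : Prop :=
  4 ≤ n ∧ Function.Injective f ∧
    ∀ i j : ZMod n, G.Adj (f i) (f j) ↔ (j = i + 1 ∨ i = j + 1)

def HasInducedPan {V : Type*} (G : SimpleGraph V) : Prop :=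
  ∃ (n : ℕ) (f : ZMod n → V) (x : V),
    IsHole G n f ∧ x ∉ Set.range f ∧ ∃! i : ZMod n, G.Adj x (f i)

def HasEvenHole {V : Type*} (G : SimpleGraph V) : Prop :=
  ∃ (n : ℕ) (f : ZMod n → V), IsHole G n f ∧ Even n

def IsBuoy {V : Type*} (G : SimpleGraph V) (ℓ : ℕ) (B : ZMod ℓ → Set V) : Prop :=
  5 ≤ ℓ ∧
  (∀ i, (B i).Nonempty) ∧
  (∀ i, G.IsClique (B i)) ∧
  (Pairwise fun i j => Disjoint (B i) (B j)) ∧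
  (∀ i, ∀ v ∈ B i, ∃ u ∈ B (i + 1), G.Adj v u) ∧
  (∀ i, ∀ v ∈ B i, ∃ u ∈ B (i - 1), G.Adj v u) ∧
  (∀ i j : ZMod ℓ, j ≠ i → j ≠ i + 1 → j ≠ i - 1 →
    ∀ v ∈ B i, ∀ u ∈ B j, ¬ G.Adj v u)

/-! ### auxiliary lemmas -/

lemma st13_natCast_ne_zero {ℓ : ℕ} [NeZero ℓ] {c : ℕ} (h0 : 0 < c) (h1 : c < ℓ) :
    (c : ZMod ℓ) ≠ 0 := by
  rw [Ne, ZMod.natCast_eq_zero_iff]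
  intro hdvd
  exact absurd (Nat.le_of_dvd h0 hdvd) (not_le.2 h1)

lemma st13_succ_val {n : ℕ} [NeZero n] (h1 : 1 < n) (t : ZMod n) :
    (t + 1).val = if t.val = n - 1 then 0 else t.val + 1 := by
  haveI : Fact (1 < n) := ⟨h1⟩
  rw [ZMod.val_add, ZMod.val_one]
  have ht : t.val < n := ZMod.val_lt t
  split
  · next h =>
      rw [h]
      have h2 : n - 1 + 1 = n := by omega
      rw [h2, Nat.mod_self]
  · next h => exact Nat.mod_eq_of_lt (by omega)

lemma st13_cast_pred {n : ℕ} [NeZero n] (h1 : 1 < n) : ((n - 1 : ℕ) : ZMod n) = -1 := by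
  have : ((n : ℕ) : ZMod n) = 0 := ZMod.natCast_self n
  rw [Nat.cast_sub (by omega), this, Nat.cast_one, zero_sub]

lemma st13_val_cast_inj {n : ℕ} [NeZero n] {a b : ℕ} (ha : a < n) (hb : b < n)
    (h : (a : ZMod n) = (b : ZMod n)) : a = b := by
  have := congrArg ZMod.val h
  rwa [ZMod.val_cast_of_lt ha, ZMod.val_cast_of_lt hb] at this

lemma st13_cast_succ_cases {n : ℕ} [NeZero n] (h1 : 1 < n) {a b : ℕ} (ha : a < n) (hb : b < n)
    (h : (b : ZMod n) = (a : ZMod n) + 1) : b = a + 1 ∨ (a = n - 1 ∧ b = 0) := by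
  haveI : Fact (1 < n) := ⟨h1⟩
  have := congrArg ZMod.val h
  rw [ZMod.val_cast_of_lt hb, ZMod.val_add, ZMod.val_cast_of_lt ha, ZMod.val_one] at this
  by_cases hc : a = n - 1
  · right
    refine ⟨hc, ?_⟩
    rw [this, hc]
    have : n - 1 + 1 = n := by omega
    rw [this, Nat.mod_self]
  · left
    rw [this]
    exact Nat.mod_eq_of_lt (by omega)

lemma st13_val_natCast_self {n : ℕ} [NeZero n] (t : ZMod n) : ((t.val : ℕ) : ZMod n) = t :=
  (ZMod.natCast_val t).trans (ZMod.cast_id n t)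

section St13Aux

variable {V : Type*} {G : SimpleGraph V} {ℓ : ℕ} {B : ZMod ℓ → Set V}

lemma st13_adj_bags (hB : IsBuoy G ℓ B) {j k : ZMod ℓ} {v u : V}
    (hv : v ∈ B j) (hu : u ∈ B k) (h : G.Adj v u) : k = j ∨ k = j + 1 ∨ k = j - 1 := by
  by_contra hc
  push_neg at hc
  exact hB.2.2.2.2.2.2 j k hc.1 hc.2.1 hc.2.2 v hv u hu h

lemma st13_ne_of_bags (hB : IsBuoy G ℓ B) {j k : ZMod ℓ} {v u : V}
    (hv : v ∈ B j) (hu : u ∈ B k) (hjk : j ≠ k) : v ≠ u := by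
  rintro rfl
  exact Set.disjoint_left.mp (hB.2.2.2.1 hjk) hv hu

lemma st13_clique_adj (hB : IsBuoy G ℓ B) {j : ZMod ℓ} {v u : V}
    (hv : v ∈ B j) (hu : u ∈ B j) (hne : v ≠ u) : G.Adj v u :=
  hB.2.2.1 j hv hu hne

lemma st13_trans_hole (hB : IsBuoy G ℓ B) (q : ZMod ℓ → V)
    (hq : ∀ j, q j ∈ B j) (hadj : ∀ j, G.Adj (q j) (q (j + 1))) : IsHole G ℓ q := by
  have hl := hB.1
  refine ⟨by omega, ?_, ?_⟩
  · intro j k h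
    by_contra hne
    exact st13_ne_of_bags hB (hq j) (hq k) hne h
  · intro j k
    constructor
    · intro h
      rcases st13_adj_bags hB (hq j) (hq k) h with e | e | e
      · exact absurd rfl (by subst e; exact h.ne)
      · exact Or.inl e
      · exact Or.inr (by rw [e, sub_add_cancel])
    · rintro (e | e)
      · rw [e]; exact hadj j
      · rw [e]; exact (hadj k).symm

lemma st13_pan (hpan : ¬ HasInducedPan G) (hB : IsBuoy G ℓ B) (q : ZMod ℓ → V)
    (hq : ∀ j, q j ∈ B j) (hadj : ∀ j, G.Adj (q j) (q (j + 1)))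
    (z : V) (hz : ∀ j, z ≠ q j) (t : ZMod ℓ) (hzt : G.Adj z (q t))
    (huniq : ∀ j, G.Adj z (q j) → j = t) : False := by
  apply hpan
  refine ⟨ℓ, q, z, st13_trans_hole hB q hq hadj, ?_, ⟨t, hzt, huniq⟩⟩
  rintro ⟨j, hj⟩
  exact hz j hj.symm

lemma st13_hole4 {V : Type*} {G : SimpleGraph V} {a b c d : V}
    (heven : ¬ HasEvenHole G)
    (hab : G.Adj a b) (hbc : G.Adj b c) (hcd : G.Adj c d) (hda : G.Adj d a)
    (hac : ¬ G.Adj a c) (hbd : ¬ G.Adj b d) (hac' : a ≠ c) (hbd' : b ≠ d) : False := by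
  have quad : ∀ t : ZMod 4, t = 0 ∨ t = 1 ∨ t = 2 ∨ t = 3 := by decide
  apply heven
  refine ⟨4, ![a, b, c, d], ⟨le_refl 4, ?_, ?_⟩, by decide⟩
  · intro s t hst
    rcases quad s with rfl | rfl | rfl | rfl <;> rcases quad t with rfl | rfl | rfl | rfl <;>
      simp only [Matrix.cons_val_zero, Matrix.cons_val_one, Matrix.head_cons,
        Matrix.cons_val_two, Matrix.tail_cons, Matrix.cons_val_three] at hst <;>
      first
        | rfl
        | exact absurd hst hab.ne | exact absurd hst.symm hab.ne
        | exact absurd hst hbc.ne | exact absurd hst.symm hbc.ne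
        | exact absurd hst hcd.ne | exact absurd hst.symm hcd.ne
        | exact absurd hst hda.ne.symm | exact absurd hst.symm hda.ne.symm
        | exact absurd hst hac' | exact absurd hst.symm hac'
        | exact absurd hst hbd' | exact absurd hst.symm hbd'
  · intro s t
    rcases quad s with rfl | rfl | rfl | rfl <;> rcases quad t with rfl | rfl | rfl | rfl <;>
      simp only [Matrix.cons_val_zero, Matrix.cons_val_one, Matrix.head_cons,
        Matrix.cons_val_two, Matrix.tail_cons, Matrix.cons_val_three] <;>
      first
        | exact iff_of_false (G.irrefl) (by decide)
        | exact iff_of_true hab (by decide) | exact iff_of_true hab.symm (by decide)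
        | exact iff_of_true hbc (by decide) | exact iff_of_true hbc.symm (by decide)
        | exact iff_of_true hcd (by decide) | exact iff_of_true hcd.symm (by decide)
        | exact iff_of_true hda (by decide) | exact iff_of_true hda.symm (by decide)
        | exact iff_of_false hac (by decide) | exact iff_of_false (fun h => hac h.symm) (by decide)
        | exact iff_of_false hbd (by decide) | exact iff_of_false (fun h => hbd h.symm) (by decide)

lemma st13_c4 (heven : ¬ HasEvenHole G) (hB : IsBuoy G ℓ B) {k : ZMod ℓ} {u1 u2 v1 v2 : V}
    (hu1 : u1 ∈ B k) (hu2 : u2 ∈ B k) (hv1 : v1 ∈ B (k + 1)) (hv2 : v2 ∈ B (k + 1))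
    (h11 : G.Adj u1 v1) (h22 : G.Adj u2 v2)
    (h12 : ¬ G.Adj u1 v2) (h21 : ¬ G.Adj u2 v1) : False := by
  have hl := hB.1
  haveI : NeZero ℓ := ⟨by omega⟩
  have hk1 : k ≠ k + 1 := by
    intro h
    exact st13_natCast_ne_zero (ℓ := ℓ) one_pos (by omega)
      (by simpa using (add_left_cancel (a := k) (by rw [add_zero]; exact h)).symm)
  have hneu : u1 ≠ u2 := by rintro rfl; exact h21 h11
  have hnev : v1 ≠ v2 := by rintro rfl; exact h12 h11
  have hu12 : G.Adj u1 u2 := st13_clique_adj hB hu1 hu2 hneu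
  have hv12 : G.Adj v1 v2 := st13_clique_adj hB hv1 hv2 hnev
  have d12 : u1 ≠ v2 := st13_ne_of_bags hB hu1 hv2 hk1
  have d21 : u2 ≠ v1 := st13_ne_of_bags hB hu2 hv1 hk1
  exact st13_hole4 heven h11 hv12 (h22.symm) (hu12.symm) h12
    (fun h => h21 h.symm) d12 (st13_ne_of_bags hB hv1 hu2 (Ne.symm hk1))

end St13Aux
section St13Seam

variable {V : Type*} {G : SimpleGraph V} {ℓ : ℕ} {B : ZMod ℓ → Set V}

lemma st13_seam (heven : ¬ HasEvenHole G) (hodd : Odd ℓ) (hB : IsBuoy G ℓ B)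
    (q : ZMod ℓ → V) (hq : ∀ j, q j ∈ B j) (s : ZMod ℓ) (w : V)
    (hchain : ∀ j, j ≠ s → G.Adj (q j) (q (j + 1)))
    (hseam : ¬ G.Adj (q s) (q (s + 1)))
    (hw1 : G.Adj (q s) w) (hw2 : G.Adj w (q (s + 1)))
    (hwn : ∀ j, j ≠ s → j ≠ s + 1 → ¬ G.Adj w (q j)) : False := by
  have hl := hB.1
  haveI : NeZero ℓ := ⟨by omega⟩
  haveI : NeZero (ℓ + 1) := ⟨by omega⟩
  -- w is distinct from every chain vertex
  have hwq : ∀ m : ZMod ℓ, w ≠ q m := by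
    intro m hwm
    have h2 : G.Adj (q m) (q (s + 1)) := hwm ▸ hw2
    rcases st13_adj_bags hB (hq m) (hq (s + 1)) h2 with e | e | e
    · rw [← e] at hwm
      exact hseam (hwm ▸ hw1)
    · have hm : m = s := by
        have := add_right_cancel (b := (1 : ZMod ℓ)) e
        exact this.symm
      rw [hm] at hwm
      exact hseam (hwm ▸ hw2)
    · have hm : m = s + 2 := by
        have : s + 1 + 1 = m := by rw [e, sub_add_cancel]
        rw [← this]; ring
      rw [hm] at hwm
      have h1 : G.Adj (q s) (q (s + 2)) := hwm ▸ hw1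
      rcases st13_adj_bags hB (hq s) (hq (s + 2)) h1 with e' | e' | e'
      · exact st13_natCast_ne_zero (ℓ := ℓ) (c := 2) (by omega) (by omega)
          (by push_cast; linear_combination e')
      · exact st13_natCast_ne_zero (ℓ := ℓ) (c := 1) (by omega) (by omega)
          (by push_cast; linear_combination e')
      · exact st13_natCast_ne_zero (ℓ := ℓ) (c := 3) (by omega) (by omega)
          (by push_cast; linear_combination e')
  -- abbreviations for the two special chain vertices
  have hAs : q (s + 1 + ((ℓ - 1 : ℕ) : ZMod ℓ)) = q s := by
    rw [st13_cast_pred (n := ℓ) (by omega)]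
    congr 1; ring
  have hA0 : q (s + 1 + ((0 : ℕ) : ZMod ℓ)) = q (s + 1) := by
    norm_num
  -- chain steps
  have hstep : ∀ a : ℕ, a < ℓ - 1 →
      G.Adj (q (s + 1 + (a : ZMod ℓ))) (q (s + 1 + ((a + 1 : ℕ) : ZMod ℓ))) := by
    intro a ha
    have hne : s + 1 + (a : ZMod ℓ) ≠ s := by
      intro h
      exact st13_natCast_ne_zero (ℓ := ℓ) (c := a + 1) (by omega) (by omega)
        (by push_cast; linear_combination h)
    have h := hchain _ hne
    have : s + 1 + ((a + 1 : ℕ) : ZMod ℓ) = s + 1 + (a : ZMod ℓ) + 1 := by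
      push_cast; ring
    rw [this]
    exact h
  -- the even-hole function
  apply heven
  refine ⟨ℓ + 1, fun t => if t.val < ℓ then q (s + 1 + (t.val : ZMod ℓ)) else w,
    ⟨by omega, ?_, ?_⟩, hodd.add_one⟩
  · -- injectivity
    intro t u h
    dsimp only at h
    by_contra hne
    have hv : t.val ≠ u.val := fun e => hne (ZMod.val_injective _ e)
    have ht' : t.val < ℓ + 1 := ZMod.val_lt t
    have hu' : u.val < ℓ + 1 := ZMod.val_lt u
    rcases lt_or_ge t.val ℓ with h1 | h1 <;> rcases lt_or_ge u.val ℓ with h2 | h2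
    · rw [if_pos h1, if_pos h2] at h
      have hbags : s + 1 + (t.val : ZMod ℓ) ≠ s + 1 + (u.val : ZMod ℓ) := by
        intro e
        exact hv (st13_val_cast_inj h1 h2 (by linear_combination e))
      exact st13_ne_of_bags hB (hq _) (hq _) hbags h
    · rw [if_pos h1, if_neg (by omega)] at h
      exact hwq _ h.symm
    · rw [if_neg (by omega), if_pos h2] at h
      exact hwq _ h
    · omega
  · -- adjacency characterization
    have hcons : ∀ t : ZMod (ℓ + 1),
        G.Adj ((fun t : ZMod (ℓ+1) => if t.val < ℓ then q (s + 1 + (t.val : ZMod ℓ)) else w) t)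
          ((fun t : ZMod (ℓ+1) => if t.val < ℓ then q (s + 1 + (t.val : ZMod ℓ)) else w) (t + 1)) := by
      intro t
      have ht' : t.val < ℓ + 1 := ZMod.val_lt t
      have hsv : (t + 1).val = if t.val = (ℓ + 1) - 1 then 0 else t.val + 1 :=
        st13_succ_val (by omega) t
      dsimp only
      by_cases he : t.val = ℓ
      · rw [if_neg (by omega)]
        have : (t + 1).val = 0 := by rw [hsv, if_pos (by omega)]
        rw [this, if_pos (by omega), hA0]
        exact hw2
      · have hlt : t.val < ℓ := by omega
        have hv1 : (t + 1).val = t.val + 1 := by rw [hsv, if_neg (by omega)]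
        rw [if_pos hlt]
        by_cases he2 : t.val = ℓ - 1
        · rw [hv1, if_neg (by omega), he2, hAs]
          exact hw1
        · rw [hv1, if_pos (by omega)]
          exact hstep t.val (by omega)
    have hmain : ∀ t u : ZMod (ℓ + 1),
        G.Adj ((fun t : ZMod (ℓ+1) => if t.val < ℓ then q (s + 1 + (t.val : ZMod ℓ)) else w) t)
          ((fun t : ZMod (ℓ+1) => if t.val < ℓ then q (s + 1 + (t.val : ZMod ℓ)) else w) u) →
          (u = t + 1 ∨ t = u + 1) := by
      intro t u h
      have ht' : t.val < ℓ + 1 := ZMod.val_lt t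
      have hu' : u.val < ℓ + 1 := ZMod.val_lt u
      have hsvt : (t + 1).val = if t.val = (ℓ + 1) - 1 then 0 else t.val + 1 :=
        st13_succ_val (by omega) t
      have hsvu : (u + 1).val = if u.val = (ℓ + 1) - 1 then 0 else u.val + 1 :=
        st13_succ_val (by omega) u
      dsimp only at h
      rcases lt_or_ge t.val ℓ with h1 | h1 <;> rcases lt_or_ge u.val ℓ with h2 | h2
      · rw [if_pos h1, if_pos h2] at h
        rcases st13_adj_bags hB (hq _) (hq _) h with e | e | e
        · exfalso
          have : u.val = t.val := st13_val_cast_inj h2 h1 (by linear_combination e)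
          exact h.ne (by rw [ZMod.val_injective _ this])
        · have : ((u.val : ℕ) : ZMod ℓ) = ((t.val : ℕ) : ZMod ℓ) + 1 := by linear_combination e
          rcases st13_cast_succ_cases (by omega) h1 h2 this with hc | ⟨hc1, hc2⟩
          · left
            apply ZMod.val_injective
            rw [hsvt, if_neg (by omega), hc]
          · exfalso
            rw [hc1, hAs] at h
            rw [hc2] at h
            rw [hA0] at h
            exact hseam h
        · have : ((t.val : ℕ) : ZMod ℓ) = ((u.val : ℕ) : ZMod ℓ) + 1 := by
            have e' : s + 1 + (u.val : ZMod ℓ) + 1 = s + 1 + (t.val : ZMod ℓ) := by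
              rw [e, sub_add_cancel]
            linear_combination -e'
          rcases st13_cast_succ_cases (by omega) h2 h1 this with hc | ⟨hc1, hc2⟩
          · right
            apply ZMod.val_injective
            rw [hsvu, if_neg (by omega), hc]
          · exfalso
            rw [hc1, hAs] at h
            rw [hc2] at h
            rw [hA0] at h
            exact hseam h.symm
      · -- u is w
        rw [if_pos h1, if_neg (by omega)] at h
        have hu : u.val = ℓ := by omega
        by_cases c1 : (t.val : ZMod ℓ) = ((ℓ - 1 : ℕ) : ZMod ℓ)
        · left
          apply ZMod.val_injective
          have : t.val = ℓ - 1 := st13_val_cast_inj h1 (by omega) c1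
          rw [hsvt, if_neg (by omega), this, hu]
          omega
        · by_cases c2 : (t.val : ZMod ℓ) = 0
          · right
            apply ZMod.val_injective
            have : t.val = 0 := st13_val_cast_inj h1 (by omega) (by push_cast; exact c2)
            rw [hsvu, if_pos (by omega), this]
          · exfalso
            refine hwn (s + 1 + (t.val : ZMod ℓ)) ?_ ?_ h.symm
            · intro e
              apply c1
              rw [st13_cast_pred (n := ℓ) (by omega)]
              linear_combination e
            · intro e
              exact c2 (by linear_combination e)
      · -- t is w
        rw [if_neg (by omega), if_pos h2] at h
        have ht : t.val = ℓ := by omega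
        by_cases c1 : (u.val : ZMod ℓ) = ((ℓ - 1 : ℕ) : ZMod ℓ)
        · right
          apply ZMod.val_injective
          have : u.val = ℓ - 1 := st13_val_cast_inj h2 (by omega) c1
          rw [hsvu, if_neg (by omega), this, ht]
          omega
        · by_cases c2 : (u.val : ZMod ℓ) = 0
          · left
            apply ZMod.val_injective
            have : u.val = 0 := st13_val_cast_inj h2 (by omega) (by push_cast; exact c2)
            rw [hsvt, if_pos (by omega), this]
          · exfalso
            refine hwn (s + 1 + (u.val : ZMod ℓ)) ?_ ?_ h
            · intro e
              apply c1
              rw [st13_cast_pred (n := ℓ) (by omega)]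
              linear_combination e
            · intro e
              exact c2 (by linear_combination e)
      · exfalso
        have : t = u := ZMod.val_injective _ (by omega)
        rw [this] at h
        exact G.irrefl h
    intro t u
    constructor
    · exact hmain t u
    · rintro (e | e)
      · rw [e]; exact hcons t
      · rw [e]; exact (hcons u).symm

end St13Seam
section St13Chain

variable {V : Type*} {G : SimpleGraph V} {ℓ : ℕ} {B : ZMod ℓ → Set V}

lemma st13_chain (hB : IsBuoy G ℓ B) (k : ZMod ℓ) (a : V) (ha : a ∈ B k) :
    ∃ q : ZMod ℓ → V, q k = a ∧ (∀ j, q j ∈ B j) ∧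
      ∀ j, j ≠ k - 1 → G.Adj (q j) (q (j + 1)) := by
  have hl := hB.1
  haveI : NeZero ℓ := ⟨by omega⟩
  have hfwd := hB.2.2.2.2.1
  let T := Σ' (j : ZMod ℓ) (v : V), v ∈ B j
  let F : T → T := fun p => ⟨p.1 + 1, (hfwd p.1 p.2.1 p.2.2).choose,
    ((hfwd p.1 p.2.1 p.2.2).choose_spec).1⟩
  let c : ℕ → T := fun n => F^[n] ⟨k, a, ha⟩
  have hcs : ∀ n, c (n + 1) = F (c n) := fun n => Function.iterate_succ_apply' F n _
  have hc1 : ∀ n : ℕ, (c n).1 = k + n := by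
    intro n
    induction n with
    | zero => simp [c]
    | succ m ih =>
      rw [hcs m]
      show (c m).1 + 1 = k + ((m + 1 : ℕ) : ZMod ℓ)
      rw [ih]; push_cast; ring
  have hadjc : ∀ n, G.Adj (c n).2.1 (c (n + 1)).2.1 := by
    intro n
    rw [hcs n]
    exact ((hfwd (c n).1 (c n).2.1 (c n).2.2).choose_spec).2
  refine ⟨fun j => (c ((j - k).val)).2.1, ?_, ?_, ?_⟩
  · have h0 : (k - k).val = 0 := by rw [sub_self]; exact ZMod.val_zero
    show (c ((k - k).val)).2.1 = a
    rw [h0]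
    rfl
  · intro j
    have hm := (c ((j - k).val)).2.2
    have e : B ((c ((j - k).val)).1) = B j := by
      rw [hc1, st13_val_natCast_self, add_sub_cancel]
    exact e ▸ hm
  · intro j hj
    have hne : (j - k).val ≠ ℓ - 1 := by
      intro hval
      apply hj
      have h2 : j - k = ((ℓ - 1 : ℕ) : ZMod ℓ) := by
        rw [← st13_val_natCast_self (j - k), hval]
      rw [st13_cast_pred (by omega)] at h2
      linear_combination h2
    have hv : (j + 1 - k).val = (j - k).val + 1 := by
      have h1 : j + 1 - k = (j - k) + 1 := by ring
      rw [h1, st13_succ_val (by omega), if_neg hne]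
    show G.Adj (c ((j - k).val)).2.1 (c ((j + 1 - k).val)).2.1
    rw [hv]
    exact hadjc _

lemma st13_hole_through (heven : ¬ HasEvenHole G) (hodd : Odd ℓ) (hB : IsBuoy G ℓ B)
    (k : ZMod ℓ) (a : V) (ha : a ∈ B k) :
    ∃ h : ZMod ℓ → V, h k = a ∧ (∀ j, h j ∈ B j) ∧ ∀ j, G.Adj (h j) (h (j + 1)) := by
  have hl := hB.1
  haveI : NeZero ℓ := ⟨by omega⟩
  have h10 : (1 : ZMod ℓ) ≠ 0 := by
    have := st13_natCast_ne_zero (ℓ := ℓ) (c := 1) one_pos (by omega)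
    simpa using this
  have hkk : k ≠ k - 1 := fun e => h10 (by linear_combination e)
  have hkk2 : k - 2 ≠ k - 1 := fun e => h10 (by linear_combination -e)
  obtain ⟨q, hqk, hqmem, hqadj⟩ := st13_chain hB k a ha
  by_cases hcl : G.Adj (q (k - 1)) (q k)
  · refine ⟨q, hqk, hqmem, fun j => ?_⟩
    by_cases hj : j = k - 1
    · subst hj; rwa [sub_add_cancel]
    · exact hqadj j hj
  · obtain ⟨w, hw, haw⟩ := hB.2.2.2.2.2.1 k a ha
    have hwne : w ≠ q (k - 1) := by
      intro e
      apply hcl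
      rw [hqk]
      exact (e ▸ haw).symm
    have hqw : G.Adj (q (k - 1)) w := st13_clique_adj hB (hqmem (k - 1)) hw (Ne.symm hwne)
    by_cases hw2 : G.Adj w (q (k - 2))
    · refine ⟨fun j => if j = k - 1 then w else q j, ?_, ?_, ?_⟩
      · dsimp only
        rw [if_neg hkk, hqk]
      · intro j
        by_cases hj : j = k - 1
        · subst hj; simpa using hw
        · simpa [hj] using hqmem j
      · intro j
        dsimp only
        by_cases hj : j = k - 1
        · subst hj
          rw [if_pos rfl, sub_add_cancel, if_neg hkk, hqk]
          exact haw.symm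
        · by_cases hj2 : j + 1 = k - 1
          · have hj' : j = k - 2 := by linear_combination hj2
            subst hj'
            rw [if_neg hkk2, if_pos hj2]
            exact hw2.symm
          · rw [if_neg hj, if_neg hj2]
            exact hqadj j hj
    · exfalso
      refine st13_seam heven hodd hB q hqmem (k - 1) w hqadj ?_ hqw ?_ ?_
      · rwa [sub_add_cancel]
      · rw [sub_add_cancel, hqk]
        exact haw.symm
      · intro j hj1 hj2
        rw [sub_add_cancel] at hj2
        by_cases hj3 : j = k - 2
        · subst hj3; exact hw2
        · exact hB.2.2.2.2.2.2 (k - 1) j hj1 (by rwa [sub_add_cancel]) (by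
            rw [show k - 1 - 1 = k - 2 by ring]; exact hj3) w hw (q j) (hqmem j)

end St13Chain
section St13Main

variable {V : Type*} {G : SimpleGraph V} {ℓ : ℕ} {B : ZMod ℓ → Set V}

lemma st13_claim2 (hpan : ¬ HasInducedPan G) (heven : ¬ HasEvenHole G)
    (hodd : Odd ℓ) (hB : IsBuoy G ℓ B)
    (x : V) (hx : x ∉ ⋃ j, B j) (i : ZMod ℓ)
    (hi1 : ∃ b ∈ B (i + 1), G.Adj x b)
    (hother : ∀ j : ZMod ℓ, j ≠ i → j ≠ i + 1 → ∀ b ∈ B j, ¬ G.Adj x b) :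
    ∀ a ∈ B i, G.Adj x a := by
  have hl := hB.1
  haveI : NeZero ℓ := ⟨by omega⟩
  have hfar := hB.2.2.2.2.2.2
  have n10 : (1 : ZMod ℓ) ≠ 0 := by
    have := st13_natCast_ne_zero (ℓ := ℓ) (c := 1) one_pos (by omega); simpa using this
  have n20 : (2 : ZMod ℓ) ≠ 0 := by
    have := st13_natCast_ne_zero (ℓ := ℓ) (c := 2) (by omega) (by omega); simpa using this
  have n30 : (3 : ZMod ℓ) ≠ 0 := by
    have := st13_natCast_ne_zero (ℓ := ℓ) (c := 3) (by omega) (by omega); simpa using this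
  have d01 : i ≠ i + 1 := fun e => n10 (by linear_combination -e)
  have d10 : i + 1 ≠ i := fun e => n10 (by linear_combination e)
  have d02 : i ≠ i + 2 := fun e => n20 (by linear_combination -e)
  have d20 : i + 2 ≠ i := fun e => n20 (by linear_combination e)
  have d12 : i + 1 ≠ i + 2 := fun e => n10 (by linear_combination -e)
  have d21 : i + 2 ≠ i + 1 := fun e => n10 (by linear_combination e)
  have d13 : i + 3 ≠ i + 1 := fun e => n20 (by linear_combination e)
  have d23 : i + 3 ≠ i + 2 := fun e => n10 (by linear_combination e)
  have d30 : i + 3 ≠ i := fun e => n30 (by linear_combination e)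
  have m0 : i - 1 ≠ i := fun e => n10 (by linear_combination -e)
  have m1 : i - 1 ≠ i + 1 := fun e => n20 (by linear_combination -e)
  have hxne : ∀ {j : ZMod ℓ} {v : V}, v ∈ B j → x ≠ v := by
    intro j v hv e
    exact hx (Set.mem_iUnion.mpr ⟨j, e ▸ hv⟩)
  have hxB : ∀ {j : ZMod ℓ} {v : V}, v ∈ B j → G.Adj x v → j = i ∨ j = i + 1 := by
    intro j v hv hadj'
    by_contra hcon
    push_neg at hcon
    exact hother j hcon.1 hcon.2 v hv hadj'
  intro a ha
  by_contra hxa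
  obtain ⟨h, hhi, hmem, hadj⟩ := st13_hole_through heven hodd hB i a ha
  have hadjia : G.Adj a (h (i + 1)) := by rw [← hhi]; exact hadj i
  -- x is not adjacent to h (i+1)
  have hx1 : ¬ G.Adj x (h (i + 1)) := by
    intro hadj1
    refine st13_pan hpan hB h hmem hadj x (fun j => hxne (hmem j)) (i + 1) hadj1 ?_
    intro j hj
    rcases hxB (hmem j) hj with rfl | rfl
    · rw [hhi] at hj; exact absurd hj hxa
    · rfl
  obtain ⟨c, hc, hxc⟩ := hi1
  have hch : c ≠ h (i + 1) := fun e => hx1 (e ▸ hxc)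
  have hc1 : G.Adj c (h (i + 1)) := st13_clique_adj hB hc (hmem (i + 1)) hch
  by_cases hca : G.Adj c a <;> by_cases hc2 : G.Adj c (h (i + 2))
  · -- Case A : c adj a and h(i+2) : replace h(i+1) by c, pan at x
    have hmemA : ∀ j, (if j = i + 1 then c else h j) ∈ B j := by
      intro j
      by_cases hj : j = i + 1
      · subst hj; simpa using hc
      · simpa [hj] using hmem j
    have hadjA : ∀ j, G.Adj (if j = i + 1 then c else h j)
        (if j + 1 = i + 1 then c else h (j + 1)) := by
      intro j
      by_cases hj : j = i + 1
      · subst hj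
        rw [if_pos rfl, if_neg (by intro e; exact d10 (add_right_cancel e))]
        rw [show i + 1 + 1 = i + 2 by ring]
        exact hc2
      · by_cases hj1 : j + 1 = i + 1
        · have : j = i := add_right_cancel hj1
          subst this
          rw [if_neg hj, if_pos rfl, hhi]
          exact hca.symm
        · rw [if_neg hj, if_neg hj1]
          exact hadj j
    refine st13_pan hpan hB _ hmemA hadjA x (fun j => hxne (hmemA j)) (i + 1) ?_ ?_
    · rw [if_pos rfl]; exact hxc
    · intro j hj
      rcases hxB (hmemA j) hj with rfl | rfl
      · rw [if_neg d01, hhi] at hj; exact absurd hj hxa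
      · rfl
  · -- Case B : c adj a, c not adj h(i+2) : go through d in B(i+2)
    obtain ⟨d, hd', hcd⟩ := hB.2.2.2.2.1 (i + 1) c hc
    have hd : d ∈ B (i + 2) := by rwa [show i + 1 + 1 = i + 2 by ring] at hd'
    have hdh : d ≠ h (i + 2) := fun e => hc2 (e ▸ hcd)
    have hdh2 : G.Adj d (h (i + 2)) := st13_clique_adj hB hd (hmem (i + 2)) hdh
    by_cases hd3 : G.Adj d (h (i + 3))
    · -- transversal hole with c, d replacing h(i+1), h(i+2) : pan at x
      have hmemB : ∀ j, (if j = i + 1 then c else if j = i + 2 then d else h j) ∈ B j := by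
        intro j
        by_cases hj : j = i + 1
        · subst hj; simpa using hc
        · by_cases hj2 : j = i + 2
          · subst hj2; simpa [d21] using hd
          · simpa [hj, hj2] using hmem j
      have hadjB : ∀ j, G.Adj (if j = i + 1 then c else if j = i + 2 then d else h j)
          (if j + 1 = i + 1 then c else if j + 1 = i + 2 then d else h (j + 1)) := by
        intro j
        by_cases hj : j = i + 1
        · subst hj
          rw [if_pos rfl, if_neg (by intro e; exact d10 (add_right_cancel e)),
            if_pos (by ring)]
          exact hcd
        · by_cases hj2 : j = i + 2
          · subst hj2
            rw [if_neg d21, if_pos rfl,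
              if_neg (by intro e'; exact n20 (by linear_combination e')),
              if_neg (by intro e'; exact n10 (by linear_combination e')),
              show i + 2 + 1 = i + 3 by ring]
            exact hd3
          · by_cases hj1 : j + 1 = i + 1
            · have : j = i := add_right_cancel hj1
              subst this
              rw [if_neg hj, if_neg hj2, if_pos rfl, hhi]
              exact hca.symm
            · by_cases hj1' : j + 1 = i + 2
              · have : j = i + 1 := by linear_combination hj1'
                exact absurd this hj
              · rw [if_neg hj, if_neg hj2, if_neg hj1, if_neg hj1']
                exact hadj j
      refine st13_pan hpan hB _ hmemB hadjB x (fun j => hxne (hmemB j)) (i + 1) ?_ ?_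
      · rw [if_pos rfl]; exact hxc
      · intro j hj
        rcases hxB (hmemB j) hj with rfl | rfl
        · rw [if_neg d01, if_neg d02, hhi] at hj; exact absurd hj hxa
        · rfl
    · -- seam even hole : chain with c at i+1, seam at (i+1, i+2), extra vertex d
      have hmemA : ∀ j, (if j = i + 1 then c else h j) ∈ B j := by
        intro j
        by_cases hj : j = i + 1
        · subst hj; simpa using hc
        · simpa [hj] using hmem j
      refine st13_seam heven hodd hB _ hmemA (i + 1) d ?_ ?_ ?_ ?_ ?_
      · intro j hj
        by_cases hj1 : j + 1 = i + 1
        · have : j = i := add_right_cancel hj1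
          subst this
          rw [if_neg d01, if_pos rfl, hhi]
          exact hca.symm
        · rw [if_neg hj, if_neg hj1]
          exact hadj j
      · rw [if_pos rfl, if_neg (by intro e; exact d10 (add_right_cancel e)),
          show i + 1 + 1 = i + 2 by ring]
        exact hc2
      · rw [if_pos rfl]; exact hcd
      · rw [if_neg (by intro e; exact d10 (add_right_cancel e)),
          show i + 1 + 1 = i + 2 by ring]
        exact hdh2
      · intro j hj1 hj2
        rw [show i + 1 + 1 = i + 2 by ring] at hj2
        rw [if_neg hj1]
        by_cases hj3 : j = i + 3
        · subst hj3; exact hd3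
        · refine hfar (i + 2) j hj2 (by rwa [show i + 2 + 1 = i + 3 by ring])
            (by rw [show i + 2 - 1 = i + 1 by ring]; exact hj1) d hd (h j) (hmem j)
  · -- Case C : c not adj a, c adj h(i+2) : the "outer" case
    obtain ⟨e, he', hce⟩ := hB.2.2.2.2.2.1 (i + 1) c hc
    have he : e ∈ B i := by rwa [show i + 1 - 1 = i by ring] at he'
    have hea : e ≠ a := fun eq => hca (eq ▸ hce)
    have haec : G.Adj a e := st13_clique_adj hB ha he (Ne.symm hea)
    have he1 : G.Adj e (h (i + 1)) := by
      by_contra hne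
      exact st13_c4 heven hB ha he (hmem (i + 1)) hc hadjia hce.symm
        (fun h' => hca h'.symm) hne
    have he0 : G.Adj e (h (i - 1)) := by
      by_contra hne
      have hmemA : ∀ j, (if j = i + 1 then c else h j) ∈ B j := by
        intro j
        by_cases hj : j = i + 1
        · subst hj; simpa using hc
        · simpa [hj] using hmem j
      refine st13_seam heven hodd hB _ hmemA i e ?_ ?_ ?_ ?_ ?_
      · intro j hj
        by_cases hjc : j = i + 1
        · subst hjc
          rw [if_pos rfl, if_neg (by intro e'; exact d10 (add_right_cancel e')),
            show i + 1 + 1 = i + 2 by ring]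
          exact hc2
        · by_cases hj1 : j + 1 = i + 1
          · exact absurd (add_right_cancel hj1) hj
          · rw [if_neg hjc, if_neg hj1]
            exact hadj j
      · rw [if_neg d01, if_pos rfl, hhi]
        exact fun h' => hca h'.symm
      · rw [if_neg d01, hhi]
        exact haec
      · rw [if_pos rfl]
        exact hce.symm
      · intro j hj1 hj2
        rw [if_neg hj2]
        by_cases hj3 : j = i - 1
        · subst hj3; exact hne
        · exact hfar i j hj1 hj2 hj3 e he (h j) (hmem j)
    by_cases hxe : G.Adj x e
    · -- hole with e replacing h i : x adjacent only to e : pan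
      have hmemC : ∀ j, (if j = i then e else h j) ∈ B j := by
        intro j
        by_cases hj : j = i
        · subst hj; simpa using he
        · simpa [hj] using hmem j
      have hadjC : ∀ j, G.Adj (if j = i then e else h j)
          (if j + 1 = i then e else h (j + 1)) := by
        intro j
        by_cases hj : j = i
        · subst hj
          rw [if_pos rfl, if_neg (by intro e'; exact d10 (by linear_combination e'))]
          exact he1
        · by_cases hj1 : j + 1 = i
          · have : j = i - 1 := by linear_combination hj1
            subst this
            rw [if_neg m0, if_pos hj1]
            exact he0.symm
          · rw [if_neg hj, if_neg hj1]
            exact hadj j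
      refine st13_pan hpan hB _ hmemC hadjC x (fun j => hxne (hmemC j)) i ?_ ?_
      · rw [if_pos rfl]; exact hxe
      · intro j hj
        rcases hxB (hmemC j) hj with rfl | rfl
        · rfl
        · rw [if_neg d10] at hj; exact absurd hj hx1
    · -- hole with e, c replacing h i, h(i+1) : x adjacent only to c : pan
      have hmemD : ∀ j, (if j = i then e else if j = i + 1 then c else h j) ∈ B j := by
        intro j
        by_cases hj : j = i
        · subst hj; simpa using he
        · by_cases hj1 : j = i + 1
          · subst hj1; simpa [d10] using hc
          · simpa [hj, hj1] using hmem j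
      have hadjD : ∀ j, G.Adj (if j = i then e else if j = i + 1 then c else h j)
          (if j + 1 = i then e else if j + 1 = i + 1 then c else h (j + 1)) := by
        intro j
        by_cases hj : j = i
        · subst hj
          rw [if_pos rfl, if_neg (by intro e'; exact d10 (by linear_combination e')),
            if_pos rfl]
          exact hce.symm
        · by_cases hj1 : j = i + 1
          · subst hj1
            rw [if_neg d10, if_pos rfl,
              if_neg (by intro e'; exact d20 (by linear_combination e')),
              if_neg (by intro e'; exact d10 (add_right_cancel e')),
              show i + 1 + 1 = i + 2 by ring]
            exact hc2
          · by_cases hj2 : j + 1 = i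
            · have : j = i - 1 := by linear_combination hj2
              subst this
              rw [if_neg m0, if_neg m1, if_pos hj2]
              exact he0.symm
            · by_cases hj3 : j + 1 = i + 1
              · exact absurd (add_right_cancel hj3) hj
              · rw [if_neg hj, if_neg hj1, if_neg hj2, if_neg hj3]
                exact hadj j
      refine st13_pan hpan hB _ hmemD hadjD x (fun j => hxne (hmemD j)) (i + 1) ?_ ?_
      · rw [if_neg d10, if_pos rfl]; exact hxc
      · intro j hj
        rcases hxB (hmemD j) hj with rfl | rfl
        · rw [if_pos rfl] at hj; exact absurd hj hxe
        · rfl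
  · -- Case D : c not adj a nor h(i+2) : c itself is a pan vertex on h
    refine st13_pan hpan hB h hmem hadj c ?_ (i + 1) hc1 ?_
    · intro j
      by_cases hj : j = i + 1
      · subst hj; exact hch
      · exact st13_ne_of_bags hB hc (hmem j) (Ne.symm hj)
    · intro j hj
      rcases st13_adj_bags hB hc (hmem j) hj with e | e | e
      · exact e
      · exfalso
        rw [e, show i + 1 + 1 = i + 2 by ring] at hj
        exact hc2 hj
      · exfalso
        rw [e, show i + 1 - 1 = i by ring, hhi] at hj
        exact hca hj

end St13Main
section St13Final

variable {V : Type*} {G : SimpleGraph V} {ℓ : ℕ} {B : ZMod ℓ → Set V}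

lemma st13_rev_buoy (hB : IsBuoy G ℓ B) (r : ZMod ℓ) :
    IsBuoy G ℓ (fun j => B (r - j)) := by
  obtain ⟨hl, hne, hclq, hdisj, hfwd, hbwd, hfar⟩ := hB
  refine ⟨hl, fun j => hne _, fun j => hclq _, ?_, ?_, ?_, ?_⟩
  · intro j k hjk
    exact hdisj (fun e => hjk (by linear_combination -e))
  · intro j v hv
    obtain ⟨u, hu, hadj⟩ := hbwd (r - j) v hv
    exact ⟨u, by
      show u ∈ B (r - (j + 1))
      rwa [show r - (j + 1) = r - j - 1 by ring], hadj⟩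
  · intro j v hv
    obtain ⟨u, hu, hadj⟩ := hfwd (r - j) v hv
    exact ⟨u, by
      show u ∈ B (r - (j - 1))
      rwa [show r - (j - 1) = r - j + 1 by ring], hadj⟩
  · intro j k hk1 hk2 hk3 v hv u hu
    refine hfar (r - j) (r - k) ?_ ?_ ?_ v hv u hu
    · exact fun e => hk1 (by linear_combination -e)
    · exact fun e => hk3 (by linear_combination -e)
    · exact fun e => hk2 (by linear_combination -e)

lemma st13_claim2' (hpan : ¬ HasInducedPan G) (heven : ¬ HasEvenHole G)
    (hodd : Odd ℓ) (hB : IsBuoy G ℓ B)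
    (x : V) (hx : x ∉ ⋃ j, B j) (i : ZMod ℓ)
    (hi : ∃ b ∈ B i, G.Adj x b)
    (hother : ∀ j : ZMod ℓ, j ≠ i → j ≠ i + 1 → ∀ b ∈ B j, ¬ G.Adj x b) :
    ∀ c ∈ B (i + 1), G.Adj x c := by
  have hl := hB.1
  haveI : NeZero ℓ := ⟨by omega⟩
  have key := st13_claim2 (B := fun j => B (i + i + 1 - j)) hpan heven hodd
    (st13_rev_buoy hB (i + i + 1)) x ?_ i ?_ ?_
  · intro c hc
    have := key c (by
      show c ∈ B (i + i + 1 - i)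
      rw [show i + i + 1 - i = i + 1 by ring]; exact hc)
    exact this
  · intro hmem
    apply hx
    obtain ⟨S, ⟨j, rfl⟩, hS⟩ := hmem
    exact Set.mem_iUnion.mpr ⟨i + i + 1 - j, hS⟩
  · obtain ⟨b, hb, hadj⟩ := hi
    exact ⟨b, by
      show b ∈ B (i + i + 1 - (i + 1))
      rw [show i + i + 1 - (i + 1) = i by ring]; exact hb, hadj⟩
  · intro j hj1 hj2 b hb hadj
    refine hother (i + i + 1 - j) ?_ ?_ b hb hadj
    · exact fun e => hj2 (by linear_combination -e)
    · exact fun e => hj1 (by linear_combination -e)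

lemma st13_claim3 (hpan : ¬ HasInducedPan G) (heven : ¬ HasEvenHole G)
    (hodd : Odd ℓ) (hB : IsBuoy G ℓ B)
    (x : V) (hx : x ∉ ⋃ j, B j) (i : ZMod ℓ)
    (hi : ∃ b ∈ B i, G.Adj x b) (hi1 : ∃ b ∈ B (i + 1), G.Adj x b)
    (hother : ∀ j : ZMod ℓ, j ≠ i → j ≠ i + 1 → ∀ b ∈ B j, ¬ G.Adj x b) :
    ∀ a ∈ B i, ∀ c ∈ B (i + 1), G.Adj a c := by
  have hl := hB.1
  haveI : NeZero ℓ := ⟨by omega⟩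
  have hfar := hB.2.2.2.2.2.2
  have n10 : (1 : ZMod ℓ) ≠ 0 := by
    have := st13_natCast_ne_zero (ℓ := ℓ) (c := 1) one_pos (by omega); simpa using this
  have d01 : i ≠ i + 1 := fun e => n10 (by linear_combination -e)
  have d10 : i + 1 ≠ i := fun e => n10 (by linear_combination e)
  intro a ha c hc
  have hxa : G.Adj x a := st13_claim2 hpan heven hodd hB x hx i hi1 hother a ha
  have hxc : G.Adj x c := st13_claim2' hpan heven hodd hB x hx i hi hother c hc
  by_contra hac
  obtain ⟨h, hhi, hmem, hadj⟩ := st13_hole_through heven hodd hB i a ha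
  have hadjia : G.Adj a (h (i + 1)) := by rw [← hhi]; exact hadj i
  have hch : c ≠ h (i + 1) := fun e => hac (by rw [e]; exact hadjia)
  have hc1 : G.Adj c (h (i + 1)) := st13_clique_adj hB hc (hmem (i + 1)) hch
  by_cases hc2 : G.Adj c (h (i + 2))
  · -- even hole : a - x - c - h(i+2) - ... - h(i-1) - a
    have hmemA : ∀ j, (if j = i + 1 then c else h j) ∈ B j := by
      intro j
      by_cases hj : j = i + 1
      · subst hj; simpa using hc
      · simpa [hj] using hmem j
    refine st13_seam heven hodd hB _ hmemA i x ?_ ?_ ?_ ?_ ?_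
    · intro j hj
      by_cases hjc : j = i + 1
      · subst hjc
        rw [if_pos rfl, if_neg (by intro e'; exact d10 (add_right_cancel e')),
          show i + 1 + 1 = i + 2 by ring]
        exact hc2
      · by_cases hj1 : j + 1 = i + 1
        · exact absurd (add_right_cancel hj1) hj
        · rw [if_neg hjc, if_neg hj1]
          exact hadj j
    · rw [if_neg d01, if_pos rfl, hhi]
      exact hac
    · rw [if_neg d01, hhi]
      exact hxa.symm
    · rw [if_pos rfl]
      exact hxc
    · intro j hj1 hj2
      rw [if_neg hj2]
      exact hother j hj1 hj2 (h j) (hmem j)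
  · -- c is a pan vertex on h
    refine st13_pan hpan hB h hmem hadj c ?_ (i + 1) hc1 ?_
    · intro j
      by_cases hj : j = i + 1
      · subst hj; exact hch
      · exact st13_ne_of_bags hB hc (hmem j) (Ne.symm hj)
    · intro j hj
      rcases st13_adj_bags hB hc (hmem j) hj with e | e | e
      · exact e
      · exfalso
        rw [e, show i + 1 + 1 = i + 2 by ring] at hj
        exact hc2 hj
      · exfalso
        rw [e, show i + 1 - 1 = i by ring, hhi] at hj
        exact hac hj.symm

end St13Final

theorem stmt_13 {V : Type*} (G : SimpleGraph V)
    (hpan : ¬ HasInducedPan G) (heven : ¬ HasEvenHole G)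
    (ℓ : ℕ) (hodd : Odd ℓ) (B : ZMod ℓ → Set V) (hB : IsBuoy G ℓ B)
    (x : V) (hx : x ∉ ⋃ j, B j) (i : ZMod ℓ)
    (hi : ∃ b ∈ B i, G.Adj x b) (hi1 : ∃ b ∈ B (i + 1), G.Adj x b)
    (hother : ∀ j : ZMod ℓ, j ≠ i → j ≠ i + 1 → ∀ b ∈ B j, ¬ G.Adj x b) :
    G.IsClique ({x} ∪ B i ∪ B (i + 1)) := by
  have c2 := st13_claim2 hpan heven hodd hB x hx i hi1 hother
  have c2' := st13_claim2' hpan heven hodd hB x hx i hi hother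
  have c3 := st13_claim3 hpan heven hodd hB x hx i hi hi1 hother
  intro u hu v hv huv
  simp only [Set.union_assoc, Set.mem_union, Set.mem_singleton_iff] at hu hv
  rcases hu with rfl | hu | hu <;> rcases hv with rfl | hv | hv
  · exact absurd rfl huv
  · exact c2 v hv
  · exact c2' v hv
  · exact (c2 u hu).symm
  · exact st13_clique_adj hB hu hv huv
  · exact c3 u hu v hv
  · exact (c2' u hu).symm
  · exact (c3 v hv u hu).symm
  · exact st13_clique_adj hB hu hv huv
end

section
/- Let B be an ℓ-buoy (ℓ ≥ 5) in which, for each bag B_i, the vertices of B_i are linearly ordered by neighborhood inclusion (for any a, b ∈ B_i, N(a) − {b} ⊆ N(b) or N(b) − {a} ⊆ N(a), within B). Then every hole contained in B has length exactly ℓ. -/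
theorem stmt_16 {V : Type*} (G : SimpleGraph V)
    (ℓ : ℕ) (B : ZMod ℓ → Set V) (hB : IsBuoy G ℓ B)
    (horder : ∀ i : ZMod ℓ, ∀ a ∈ B i, ∀ b ∈ B i,
      (∀ z ∈ ⋃ j, B j, z ≠ b → G.Adj a z → G.Adj b z) ∨
      (∀ z ∈ ⋃ j, B j, z ≠ a → G.Adj b z → G.Adj a z)) :
    ∀ (k : ℕ) (f : ZMod k → V), IsHole G k f →
      Set.range f ⊆ ⋃ j, B j → k = ℓ := by
  obtain ⟨h5, hne, hclique, hdisj, hnext, hprev, hnon⟩ := hB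
  intro k f hhole hsub
  obtain ⟨hk4, hfinj, hadj⟩ := hhole
  haveI : NeZero k := ⟨by omega⟩
  haveI : NeZero ℓ := ⟨by omega⟩
  -- small casts are nonzero in ZMod k
  have hcast : ∀ m : ℕ, 0 < m → m < k → ((m : ZMod k)) ≠ 0 := by
    intro m hm1 hm2 h
    rw [ZMod.natCast_eq_zero_iff] at h
    exact absurd (Nat.le_of_dvd hm1 h) (by omega)
  have h1 : (1 : ZMod k) ≠ 0 := by
    have := hcast 1 (by omega) (by omega); simpa using this
  have h2 : (2 : ZMod k) ≠ 0 := by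
    have := hcast 2 (by omega) (by omega); simpa using this
  have h3 : (3 : ZMod k) ≠ 0 := by
    have := hcast 3 (by omega) (by omega); simpa using this
  -- choose bag indices
  have hmem : ∀ i : ZMod k, f i ∈ ⋃ j, B j := fun i => hsub ⟨i, rfl⟩
  choose g hg using fun i => Set.mem_iUnion.mp (hmem i)
  -- no two consecutive hole vertices in the same bag
  have stepne : ∀ i : ZMod k, g (i + 1) ≠ g i := by
    intro i h
    have hfi : f i ∈ B (g i) := hg i
    have hfi1 : f (i + 1) ∈ B (g i) := h ▸ hg (i + 1)
    rcases horder (g i) (f i) hfi (f (i + 1)) hfi1 with hd | hd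
    · have hne' : f (i - 1) ≠ f (i + 1) := by
        intro he
        exact h2 (by linear_combination - hfinj he)
      have hadj' : G.Adj (f i) (f (i - 1)) :=
        (hadj i (i - 1)).mpr (Or.inr (by ring))
      have hz := hd (f (i - 1)) (hmem (i - 1)) hne' hadj'
      rcases (hadj (i + 1) (i - 1)).mp hz with he | he
      · exact h3 (by linear_combination - he)
      · exact h1 (by linear_combination he)
    · have hne' : f (i + 2) ≠ f i := by
        intro he
        exact h2 (by linear_combination hfinj he)
      have hadj' : G.Adj (f (i + 1)) (f (i + 2)) :=
        (hadj (i + 1) (i + 2)).mpr (Or.inl (by ring))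
      have hz := hd (f (i + 2)) (hmem (i + 2)) hne' hadj'
      rcases (hadj i (i + 2)).mp hz with he | he
      · exact h1 (by linear_combination he)
      · exact h3 (by linear_combination - he)
  -- g is injective
  have ginj : Function.Injective g := by
    intro i j h
    by_contra hij
    have hadj' : G.Adj (f i) (f j) :=
      hclique (g i) (hg i) (h ▸ hg j) (fun he => hij (hfinj he))
    rcases (hadj i j).mp hadj' with he | he
    · exact stepne i (by rw [← he, h])
    · exact stepne j (by rw [← he, ← h])
  have hk_le : k ≤ ℓ := by
    have := Fintype.card_le_of_injective g ginj
    simpa [ZMod.card] using this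
  -- each step moves to an adjacent bag
  have hstep : ∀ i : ZMod k, g (i + 1) = g i + 1 ∨ g (i + 1) = g i - 1 := by
    intro i
    by_contra hcon
    push_neg at hcon
    exact hnon (g i) (g (i + 1)) (stepne i) hcon.1 hcon.2 (f i) (hg i)
      (f (i + 1)) (hg (i + 1)) ((hadj i (i + 1)).mpr (Or.inl rfl))
  -- the step differences are constant
  set s : ZMod k → ZMod ℓ := fun i => g (i + 1) - g i with hs
  have hgs : ∀ i : ZMod k, g (i + 1) = g i + s i := fun i => by
    simp [hs]
  have sconst : ∀ i : ZMod k, s (i + 1) = s i := by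
    intro i
    rcases hstep i with e1 | e1 <;> rcases hstep (i + 1) with e2 | e2
    · show g (i + 1 + 1) - g (i + 1) = g (i + 1) - g i
      rw [e2, e1]; ring
    · exfalso
      have : g (i + 1 + 1) = g i := by rw [e2, e1]; ring
      exact h2 (by linear_combination ginj this)
    · exfalso
      have : g (i + 1 + 1) = g i := by rw [e2, e1]; ring
      exact h2 (by linear_combination ginj this)
    · show g (i + 1 + 1) - g (i + 1) = g (i + 1) - g i
      rw [e2, e1]; ring
  have ssq : s 0 * s 0 = 1 := by
    rcases hstep 0 with e | e <;>
      · show (g (0 + 1) - g 0) * (g (0 + 1) - g 0) = 1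
        rw [e]; ring
  have sn : ∀ n : ℕ, s ((n : ZMod k)) = s 0 := by
    intro n
    induction n with
    | zero => simp
    | succ m ih =>
      have : ((m + 1 : ℕ) : ZMod k) = (m : ZMod k) + 1 := by push_cast; ring
      rw [this, sconst, ih]
  have gn : ∀ n : ℕ, g ((n : ZMod k)) = g 0 + (n : ZMod ℓ) * s 0 := by
    intro n
    induction n with
    | zero => simp
    | succ m ih =>
      have hc : ((m + 1 : ℕ) : ZMod k) = (m : ZMod k) + 1 := by push_cast; ring
      rw [hc, hgs, ih, sn]
      push_cast
      ring
  have hk0 : ((k : ZMod k)) = 0 := ZMod.natCast_self k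
  have := gn k
  rw [hk0] at this
  have hks : ((k : ZMod ℓ)) * s 0 = 0 := by linear_combination - this
  have hkz : ((k : ZMod ℓ)) = 0 := by
    have := congrArg (· * s 0) hks
    simpa [mul_assoc, ssq] using this
  rw [ZMod.natCast_eq_zero_iff] at hkz
  have := Nat.le_of_dvd (by omega) hkz
  omega
end

section
/- Let B be an odd ℓ-buoy (ℓ ≥ 5 odd) where each bag is linearly ordered by neighborhood inclusion. Then the following are equivalent: (i) there exist two vertices a, b in some bag B_i such that a strictly dominates b with respect to B_{i-1} but b does not dominate a with respect to B_{i+1}; (ii) B contains an induced pan; (iii) there is an index i such that neither B_{i-1} ∪ B_i nor B_i ∪ B_{i+1} induces a clique. -/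
/-!
(i) ⇒ (ii): let `z ∈ B_{i-1}` and `w ∈ B_{i+1}` be neighbours of `a` that `b` misses. Complete
`z, a, w` to a cycle meeting every bag exactly once; such a cycle is a hole, and `b` is a pendant
at `a`. The cycle exists because bags two apart can be bridged: for `x ∈ B_p` and `z ∈ B_{p+2}`,
comparing in `B_{p+1}` a neighbour of `x` with a neighbour of `z` yields a common neighbour.

(ii) ⇒ (iii): the unique neighbour `y ∈ B_q` of the pendant `x` on the hole is the centre of a claw
formed by `x` and the two hole-neighbours of `y`. These lie in `B_{q-1} ∪ B_q ∪ B_{q+1}`, and two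
cliques cannot cover three pairwise non-adjacent vertices.

(iii) ⇒ (i): the two non-cliques give `z ∈ B_{i-1}` and `w ∈ B_{i+1}` each missed by some vertex of
`B_i`, and each seen by some vertex of `B_i`. As `B_i` is linearly ordered, some `a ∈ B_i` sees both
`z` and `w`, some `b ∈ B_i` sees neither, and `a` dominates `b`.
-/

theorem iff_and_iff_of_imp_cycle {P Q R : Prop} (hPQ : P → Q) (hQR : Q → R) (hRP : R → P) :
    (P ↔ Q) ∧ (Q ↔ R) :=
  ⟨⟨hPQ, hRP ∘ hQR⟩, ⟨hQR, hPQ ∘ hRP⟩⟩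

namespace ZMod

theorem natCast_ne_zero_of_lt {k c : ℕ} (hc : c ≠ 0) (hck : c < k) : (c : ZMod k) ≠ 0 := by
  rw [Ne, natCast_eq_zero_iff]
  exact fun h => hc (Nat.eq_zero_of_dvd_of_lt h hck)

theorem rel_val_val_add_one {α : Type*} {n : ℕ} [NeZero n] (r : α → α → Prop) (g : ℕ → α)
    (hstep : ∀ m, m + 1 < n → r (g m) (g (m + 1))) (hclose : r (g (n - 1)) (g 0))
    (j : ZMod n) : r (g j.val) (g (j + 1).val) := by
  have hj : j + 1 = ((j.val + 1 : ℕ) : ZMod n) := by push_cast; rw [natCast_zmod_val]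
  rcases lt_or_ge (j.val + 1) n with h | h
  · rw [hj, val_cast_of_lt h]
    exact hstep _ h
  · have hval : j.val + 1 = n := by have := j.val_lt; omega
    rw [hj, hval, natCast_self, val_zero, show j.val = n - 1 by omega]
    exact hclose

end ZMod

namespace SimpleGraph

variable {V : Type*} {G : SimpleGraph V}

theorem IsIndepSet.encard_le_two {s S T : Set V} (hs : G.IsIndepSet s) (hS : G.IsClique S)
    (hT : G.IsClique T) (hsub : s ⊆ S ∪ T) : s.encard ≤ 2 := by
  have inter_le_one : ∀ {C : Set V}, G.IsClique C → (s ∩ C).encard ≤ 1 := fun hC =>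
    Set.encard_le_one_iff.2 fun a b ha hb =>
      by_contra fun hab => hs ha.1 hb.1 hab (hC ha.2 hb.2 hab)
  calc s.encard = ((s ∩ S) ∪ (s ∩ T)).encard := by
        rw [← Set.inter_union_distrib_left, Set.inter_eq_left.2 hsub]
    _ ≤ (s ∩ S).encard + (s ∩ T).encard := Set.encard_union_le _ _
    _ ≤ 1 + 1 := add_le_add (inter_le_one hS) (inter_le_one hT)
    _ = 2 := by norm_num

theorem exists_not_adj_of_not_isClique_union {S T : Set V} (hS : G.IsClique S)
    (hT : G.IsClique T) (h : ¬ G.IsClique (S ∪ T)) :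
    ∃ x ∈ S, ∃ y ∈ T, x ≠ y ∧ ¬ G.Adj x y := by
  by_contra! hall
  exact h <| Set.pairwise_union.2
    ⟨hS, hT, fun x hx y hy hxy => ⟨hall x hx y hy hxy, (hall x hx y hy hxy).symm⟩⟩

end SimpleGraph

theorem IsHole.isIndepSet_of_unique_adj {V : Type*} {G : SimpleGraph V} {k : ℕ}
    {f : ZMod k → V} {x : V} (hf : IsHole G k f) (hx : x ∉ Set.range f) {i : ZMod k}
    (hi : ∀ j, G.Adj x (f j) → j = i) :
    G.IsIndepSet {x, f (i - 1), f (i + 1)} ∧ 2 < ({x, f (i - 1), f (i + 1)} : Set V).encard := by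
  obtain ⟨hk, hinj, hadj⟩ := hf
  have h1 : (1 : ZMod k) ≠ 0 := by
    exact_mod_cast ZMod.natCast_ne_zero_of_lt one_ne_zero (by omega)
  have h2 : (2 : ZMod k) ≠ 0 := by
    exact_mod_cast ZMod.natCast_ne_zero_of_lt two_ne_zero (by omega)
  have h3 : (3 : ZMod k) ≠ 0 := by
    exact_mod_cast ZMod.natCast_ne_zero_of_lt three_ne_zero (by omega)
  have hx_pred : ¬ G.Adj x (f (i - 1)) := fun h => h1 (by linear_combination -hi _ h)
  have hx_succ : ¬ G.Adj x (f (i + 1)) := fun h => h1 (by linear_combination hi _ h)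
  have hpred_succ : ¬ G.Adj (f (i - 1)) (f (i + 1)) := by
    rw [hadj]
    rintro (h | h)
    · exact h1 (by linear_combination h)
    · exact h3 (by linear_combination -h)
  have hne_pred : x ≠ f (i - 1) := fun h => hx ⟨_, h.symm⟩
  have hne_succ : x ≠ f (i + 1) := fun h => hx ⟨_, h.symm⟩
  have hpred_ne_succ : f (i - 1) ≠ f (i + 1) := fun h => h2 (by linear_combination -hinj h)
  refine ⟨?_, ?_⟩
  · simp only [SimpleGraph.IsIndepSet, Set.pairwise_insert, Set.pairwise_singleton,
      Set.mem_insert_iff, Set.mem_singleton_iff]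
    grind [SimpleGraph.Adj.symm]
  · rw [Set.encard_insert_of_notMem (by simp [hne_pred, hne_succ]), Set.encard_pair hpred_ne_succ]
    norm_num

section Buoy

variable {V : Type*} {G : SimpleGraph V} {ℓ : ℕ} {B : ZMod ℓ → Set V}

def BagsNested (G : SimpleGraph V) (B : ZMod ℓ → Set V) : Prop :=
  ∀ i : ZMod ℓ, ∀ a ∈ B i, ∀ b ∈ B i,
    (∀ z ∈ ⋃ j, B j, z ≠ b → G.Adj a z → G.Adj b z) ∨
    (∀ z ∈ ⋃ j, B j, z ≠ a → G.Adj b z → G.Adj a z)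

namespace BagsNested

theorem adj_of_adj_of_not_adj (hN : BagsNested G B) {i : ZMod ℓ} {a b z : V} (ha : a ∈ B i)
    (hb : b ∈ B i) (hz : z ∈ ⋃ j, B j) (hzb : z ≠ b) (haz : G.Adj a z) (hbz : ¬ G.Adj b z)
    {y : V} (hy : y ∈ ⋃ j, B j) (hya : y ≠ a) (hby : G.Adj b y) : G.Adj a y :=
  (hN i a ha b hb).resolve_left (fun h => hbz (h z hz hzb haz)) y hy hya hby

theorem exists_adj_adj (hN : BagsNested G B) {i : ZMod ℓ} {a d z w : V} (ha : a ∈ B i)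
    (hd : d ∈ B i) (hz : z ∈ ⋃ j, B j) (hw : w ∈ ⋃ j, B j) (hzi : z ∉ B i) (hwi : w ∉ B i)
    (haz : G.Adj a z) (hdw : G.Adj d w) : ∃ c ∈ B i, G.Adj c z ∧ G.Adj c w := by
  rcases hN i a ha d hd with h | h
  · exact ⟨d, hd, h z hz (ne_of_mem_of_not_mem hd hzi).symm haz, hdw⟩
  · exact ⟨a, ha, haz, h w hw (ne_of_mem_of_not_mem ha hwi).symm hdw⟩

theorem exists_not_adj_not_adj (hN : BagsNested G B) {i : ZMod ℓ} {b c z w : V} (hb : b ∈ B i)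
    (hc : c ∈ B i) (hz : z ∈ ⋃ j, B j) (hw : w ∈ ⋃ j, B j) (hzi : z ∉ B i) (hwi : w ∉ B i)
    (hbz : ¬ G.Adj b z) (hcw : ¬ G.Adj c w) : ∃ v ∈ B i, ¬ G.Adj v z ∧ ¬ G.Adj v w := by
  rcases hN i b hb c hc with h | h
  · exact ⟨b, hb, hbz, fun hbw => hcw (h w hw (ne_of_mem_of_not_mem hc hwi).symm hbw)⟩
  · exact ⟨c, hc, fun hcz => hbz (h z hz (ne_of_mem_of_not_mem hb hzi).symm hcz), hcw⟩

end BagsNested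

def IsTransversalPath (G : SimpleGraph V) (B : ZMod ℓ → Set V) (p : ZMod ℓ) (n : ℕ)
    (g : ℕ → V) : Prop :=
  (∀ m ≤ n, g m ∈ B (p + m)) ∧ ∀ m < n, G.Adj (g m) (g (m + 1))

def IsTransversalCycle (G : SimpleGraph V) (B : ZMod ℓ → Set V) (f : ZMod ℓ → V) : Prop :=
  (∀ j, f j ∈ B j) ∧ ∀ j, G.Adj (f j) (f (j + 1))

namespace IsTransversalPath

theorem const {p : ZMod ℓ} {x : V} (hx : x ∈ B p) : IsTransversalPath G B p 0 fun _ => x :=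
  ⟨fun m hm => by simpa [Nat.le_zero.1 hm] using hx, fun m hm => absurd hm m.not_lt_zero⟩

theorem snoc {p : ZMod ℓ} {n : ℕ} {g : ℕ → V} (hg : IsTransversalPath G B p n g) {z : V}
    (hz : z ∈ B (p + (n + 1 : ℕ))) (hgz : G.Adj (g n) z) :
    IsTransversalPath G B p (n + 1) (Function.update g (n + 1) z) := by
  refine ⟨fun m hm => ?_, fun m hm => ?_⟩
  · rcases Nat.le_succ_iff.1 hm with hm | rfl
    · rw [Function.update_of_ne (by omega)]
      exact hg.1 m hm
    · rwa [Function.update_self]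
  · rw [Function.update_of_ne (by omega)]
    rcases Nat.lt_succ_iff_lt_or_eq.1 hm with hm | rfl
    · rw [Function.update_of_ne (by omega)]
      exact hg.2 m hm
    · rwa [Function.update_self]

theorem exists_isTransversalCycle [NeZero ℓ] {p : ZMod ℓ} {g : ℕ → V}
    (hg : IsTransversalPath G B p (ℓ - 1) g) (hclose : G.Adj (g (ℓ - 1)) (g 0)) :
    ∃ f, IsTransversalCycle G B f ∧ ∀ m < ℓ, f (p + m) = g m := by
  refine ⟨fun j => g (j - p).val, ⟨fun j => ?_, fun j => ?_⟩, fun m hm => ?_⟩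
  · simpa using hg.1 _ (Nat.le_sub_one_of_lt (j - p).val_lt)
  · simpa [sub_add_eq_add_sub] using
      ZMod.rel_val_val_add_one G.Adj g (fun m hm => hg.2 m (by omega)) hclose (j - p)
  · simp [ZMod.val_cast_of_lt hm]

end IsTransversalPath

namespace IsBuoy

theorem isClique (hB : IsBuoy G ℓ B) (i : ZMod ℓ) : G.IsClique (B i) := hB.2.2.1 i

theorem not_mem_of_ne (hB : IsBuoy G ℓ B) {i j : ZMod ℓ} {x : V} (hx : x ∈ B j) (hij : j ≠ i) :
    x ∉ B i :=
  Set.disjoint_left.1 (hB.2.2.2.1 hij) hx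

theorem ne_of_mem (hB : IsBuoy G ℓ B) {i j : ZMod ℓ} {x y : V} (hx : x ∈ B i) (hy : y ∈ B j)
    (hij : i ≠ j) : x ≠ y :=
  ne_of_mem_of_not_mem hx (hB.not_mem_of_ne hy hij.symm)

theorem exists_adj_succ (hB : IsBuoy G ℓ B) {i : ZMod ℓ} {x : V} (hx : x ∈ B i) :
    ∃ y ∈ B (i + 1), G.Adj x y :=
  hB.2.2.2.2.1 i x hx

theorem exists_adj_pred (hB : IsBuoy G ℓ B) {i : ZMod ℓ} {x : V} (hx : x ∈ B i) :
    ∃ y ∈ B (i - 1), G.Adj x y :=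
  hB.2.2.2.2.2.1 i x hx

theorem eq_or_eq_or_eq_of_adj (hB : IsBuoy G ℓ B) {i j : ZMod ℓ} {x y : V} (hx : x ∈ B i)
    (hy : y ∈ B j) (hxy : G.Adj x y) : j = i ∨ j = i + 1 ∨ j = i - 1 := by
  by_contra! h
  exact hB.2.2.2.2.2.2 i j h.1 h.2.1 h.2.2 x hx y hy hxy

theorem one_ne_zero (hB : IsBuoy G ℓ B) : (1 : ZMod ℓ) ≠ 0 := by
  exact_mod_cast ZMod.natCast_ne_zero_of_lt Nat.one_ne_zero (by have := hB.1; omega)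

theorem add_one_ne (hB : IsBuoy G ℓ B) (i : ZMod ℓ) : i + 1 ≠ i :=
  fun h => hB.one_ne_zero (by linear_combination h)

theorem sub_one_ne (hB : IsBuoy G ℓ B) (i : ZMod ℓ) : i - 1 ≠ i :=
  fun h => hB.one_ne_zero (by linear_combination -h)

end IsBuoy

namespace IsTransversalCycle

variable {f : ZMod ℓ → V}

theorem isHole (hf : IsTransversalCycle G B f) (hB : IsBuoy G ℓ B) : IsHole G ℓ f := by
  refine ⟨by have := hB.1; omega, fun j j' h => ?_, fun j j' => ⟨fun h => ?_, ?_⟩⟩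
  · by_contra hne
    exact hB.ne_of_mem (hf.1 j) (hf.1 j') hne h
  · rcases hB.eq_or_eq_or_eq_of_adj (hf.1 j) (hf.1 j') h with rfl | rfl | rfl
    · exact (G.irrefl h).elim
    · exact Or.inl rfl
    · exact Or.inr (sub_add_cancel j 1).symm
  · rintro (rfl | rfl)
    · exact hf.2 j
    · exact (hf.2 j').symm

theorem unique_adj (hf : IsTransversalCycle G B f) (hB : IsBuoy G ℓ B) {i : ZMod ℓ} {b : V}
    (hb : b ∈ B i) (hbi : G.Adj b (f i)) (hpred : ¬ G.Adj b (f (i - 1)))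
    (hsucc : ¬ G.Adj b (f (i + 1))) : b ∉ Set.range f ∧ ∃! j, G.Adj b (f j) := by
  refine ⟨?_, i, hbi, fun j hj => ?_⟩
  · rintro ⟨j, rfl⟩
    by_cases hj : j = i
    · exact G.irrefl (hj ▸ hbi)
    · exact hB.not_mem_of_ne (hf.1 j) hj hb
  · rcases hB.eq_or_eq_or_eq_of_adj hb (hf.1 j) hj with rfl | rfl | rfl
    · rfl
    · exact (hsucc hj).elim
    · exact (hpred hj).elim

end IsTransversalCycle

namespace IsBuoy

theorem exists_isTransversalPath (hB : IsBuoy G ℓ B) (hN : BagsNested G B) {p : ZMod ℓ}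
    {x : V} (hx : x ∈ B p) {n : ℕ} (hn : 2 ≤ n) {z : V} (hz : z ∈ B (p + n)) :
    ∃ g : ℕ → V, g 0 = x ∧ g n = z ∧ IsTransversalPath G B p n g := by
  induction n, hn using Nat.le_induction generalizing z with
  | base =>
    have hp2 : p + ((2 : ℕ) : ZMod ℓ) = p + 1 + 1 := by push_cast; ring
    rw [hp2] at hz
    obtain ⟨u, hu, hxu⟩ := hB.exists_adj_succ hx
    obtain ⟨s, hs, hzs⟩ := hB.exists_adj_pred hz
    rw [add_sub_cancel_right] at hs
    obtain ⟨y, hy, hyx, hyz⟩ := hN.exists_adj_adj hu hs (Set.mem_iUnion_of_mem _ hx)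
      (Set.mem_iUnion_of_mem _ hz) (hB.not_mem_of_ne hx (hB.add_one_ne p).symm)
      (hB.not_mem_of_ne hz (hB.add_one_ne _)) hxu.symm hzs.symm
    have hpath := ((IsTransversalPath.const hx).snoc (by simpa using hy) hyx.symm).snoc
      (hp2 ▸ hz) hyz
    exact ⟨_, by simp, by simp, hpath⟩
  | succ n hn ih =>
    obtain ⟨s, hs, hzs⟩ := hB.exists_adj_pred hz
    rw [show p + ((n + 1 : ℕ) : ZMod ℓ) - 1 = p + n by push_cast; ring] at hs
    obtain ⟨g, hg0, hgn, hg⟩ := ih hs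
    exact ⟨_, by simp [hg0], by simp, hg.snoc hz (hgn ▸ hzs.symm)⟩

theorem exists_isTransversalCycle (hB : IsBuoy G ℓ B) (hN : BagsNested G B) {i : ZMod ℓ}
    {a z w : V} (ha : a ∈ B i) (hz : z ∈ B (i - 1)) (hw : w ∈ B (i + 1)) (haz : G.Adj a z)
    (haw : G.Adj a w) :
    ∃ f, IsTransversalCycle G B f ∧ f (i - 1) = z ∧ f i = a ∧ f (i + 1) = w := by
  obtain ⟨n, rfl⟩ : ∃ n, ℓ = n + 2 := ⟨ℓ - 2, by have := hB.1; omega⟩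
  have hz' : i + 1 + (n : ZMod (n + 2)) = i - 1 := by
    have h0 : (n : ZMod (n + 2)) + 2 = 0 := by exact_mod_cast ZMod.natCast_self (n + 2)
    linear_combination h0
  have ha' : i + 1 + ((n + 1 : ℕ) : ZMod (n + 2)) = i := by
    push_cast
    rw [← add_assoc, hz', sub_add_cancel]
  obtain ⟨g, hg0, hgz, hg⟩ :=
    hB.exists_isTransversalPath hN hw (n := n) (by have := hB.1; omega) (hz' ▸ hz)
  let g' := Function.update g (n + 1) a
  have hg'0 : g' 0 = w := by simp [g', hg0]
  have hg'z : g' n = z := by simp [g', hgz]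
  have hg'a : g' (n + 1) = a := by simp [g']
  have hpath : IsTransversalPath G B (i + 1) (n + 1) g' := hg.snoc (by rwa [ha']) (hgz ▸ haz.symm)
  have hclose : G.Adj (g' (n + 1)) (g' 0) := by rw [hg'a, hg'0]; exact haw
  obtain ⟨f, hf, hfg⟩ := hpath.exists_isTransversalCycle hclose
  refine ⟨f, hf, ?_, ?_, ?_⟩
  · rw [← hz', ← hg'z, hfg n (by omega)]
  · rw [← hg'a, ← hfg (n + 1) (by omega), ha']
  · rw [← hg'0, ← hfg 0 (by omega), Nat.cast_zero, add_zero]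

theorem exists_pan_of_not_dominates (hB : IsBuoy G ℓ B) (hN : BagsNested G B) {i : ZMod ℓ}
    {a b z w : V} (ha : a ∈ B i) (hb : b ∈ B i) (hz : z ∈ B (i - 1)) (hw : w ∈ B (i + 1))
    (haz : G.Adj a z) (hbz : ¬ G.Adj b z) (haw : G.Adj a w) (hbw : ¬ G.Adj b w) :
    ∃ (k : ℕ) (f : ZMod k → V) (x : V), IsHole G k f ∧
      Set.range f ⊆ ⋃ j, B j ∧ x ∈ ⋃ j, B j ∧ x ∉ Set.range f ∧ ∃! t, G.Adj x (f t) := by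
  obtain ⟨f, hf, hfz, hfa, hfw⟩ := hB.exists_isTransversalCycle hN ha hz hw haz haw
  have hba : G.Adj b a := hB.isClique i hb ha fun h => hbz (h ▸ haz)
  obtain ⟨hbf, hbu⟩ := hf.unique_adj hB hb (hfa ▸ hba) (hfz ▸ hbz) (hfw ▸ hbw)
  refine ⟨ℓ, f, b, hf.isHole hB, ?_, Set.mem_iUnion_of_mem _ hb, hbf, hbu⟩
  rintro _ ⟨j, rfl⟩
  exact Set.mem_iUnion_of_mem _ (hf.1 j)

theorem not_isClique_of_isIndepSet (hB : IsBuoy G ℓ B) {q : ZMod ℓ} {y : V} (hy : y ∈ B q)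
    {s : Set V} (hs : G.IsIndepSet s) (hsB : s ⊆ ⋃ j, B j) (hys : ∀ u ∈ s, G.Adj y u)
    (hcard : 2 < s.encard) :
    ¬ G.IsClique (B (q - 1) ∪ B q) ∧ ¬ G.IsClique (B q ∪ B (q + 1)) := by
  have hsub : s ⊆ B (q - 1) ∪ B q ∪ B (q + 1) := fun u hu => by
    obtain ⟨j, hj⟩ := Set.mem_iUnion.1 (hsB hu)
    rcases hB.eq_or_eq_or_eq_of_adj hy hj (hys u hu) with rfl | rfl | rfl <;> simp [hj]
  refine ⟨fun h => ?_, fun h => ?_⟩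
  · exact hcard.not_ge (hs.encard_le_two h (hB.isClique _) hsub)
  · exact hcard.not_ge (hs.encard_le_two (hB.isClique _) h (Set.union_assoc .. ▸ hsub))

theorem exists_not_isClique_of_pan (hB : IsBuoy G ℓ B) {k : ℕ} {f : ZMod k → V} {x : V}
    (hf : IsHole G k f) (hfB : Set.range f ⊆ ⋃ j, B j) (hxB : x ∈ ⋃ j, B j)
    (hxf : x ∉ Set.range f) (hx : ∃! t, G.Adj x (f t)) :
    ∃ q, ¬ G.IsClique (B (q - 1) ∪ B q) ∧ ¬ G.IsClique (B q ∪ B (q + 1)) := by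
  obtain ⟨i, hxi, hi⟩ := hx
  obtain ⟨hind, hcard⟩ := hf.isIndepSet_of_unique_adj hxf hi
  obtain ⟨q, hq⟩ := Set.mem_iUnion.1 (hfB ⟨i, rfl⟩)
  refine ⟨q, hB.not_isClique_of_isIndepSet hq hind ?_ ?_ hcard⟩
  · rintro u (rfl | rfl | rfl)
    exacts [hxB, hfB ⟨_, rfl⟩, hfB ⟨_, rfl⟩]
  · rintro u (rfl | rfl | rfl)
    exacts [hxi.symm, (hf.2.2 i (i - 1)).2 (Or.inr (sub_add_cancel i 1).symm),
      (hf.2.2 i (i + 1)).2 (Or.inl rfl)]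

theorem exists_dominating_pair (hB : IsBuoy G ℓ B) (hN : BagsNested G B) {i : ZMod ℓ}
    (hpred : ¬ G.IsClique (B (i - 1) ∪ B i)) (hsucc : ¬ G.IsClique (B i ∪ B (i + 1))) :
    ∃ a b : V, a ∈ B i ∧ b ∈ B i ∧
      (∀ z ∈ B (i - 1), G.Adj b z → G.Adj a z) ∧
      (∃ z ∈ B (i - 1), G.Adj a z ∧ ¬ G.Adj b z) ∧
      ¬ (∀ z ∈ B (i + 1), G.Adj a z → G.Adj b z) := by
  obtain ⟨z, hz, b₀, hb₀, -, hzb₀⟩ :=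
    G.exists_not_adj_of_not_isClique_union (hB.isClique _) (hB.isClique _) hpred
  obtain ⟨c₀, hc₀, w, hw, -, hc₀w⟩ :=
    G.exists_not_adj_of_not_isClique_union (hB.isClique _) (hB.isClique _) hsucc
  obtain ⟨a₀, ha₀, hza₀⟩ := hB.exists_adj_succ hz
  obtain ⟨d₀, hd₀, hwd₀⟩ := hB.exists_adj_pred hw
  rw [sub_add_cancel] at ha₀
  rw [add_sub_cancel_right] at hd₀
  have hzU := Set.mem_iUnion_of_mem _ hz
  have hwU := Set.mem_iUnion_of_mem _ hw
  have hzi := hB.not_mem_of_ne hz (hB.sub_one_ne i)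
  have hwi := hB.not_mem_of_ne hw (hB.add_one_ne i)
  obtain ⟨a, ha, haz, haw⟩ := hN.exists_adj_adj ha₀ hd₀ hzU hwU hzi hwi hza₀.symm hwd₀.symm
  obtain ⟨b, hb, hbz, hbw⟩ :=
    hN.exists_not_adj_not_adj hb₀ hc₀ hzU hwU hzi hwi (fun h => hzb₀ h.symm) hc₀w
  refine ⟨a, b, ha, hb, fun y hy hby => ?_, ⟨z, hz, haz, hbz⟩, fun h => hbw (h w hw haw)⟩
  exact hN.adj_of_adj_of_not_adj ha hb hzU (hB.ne_of_mem hz hb (hB.sub_one_ne i)) haz hbz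
    (Set.mem_iUnion_of_mem _ hy) (hB.ne_of_mem hy ha (hB.sub_one_ne i)) hby

end IsBuoy

end Buoy

theorem stmt_17_general {V : Type*} (G : SimpleGraph V)
    (ℓ : ℕ) (B : ZMod ℓ → Set V) (hB : IsBuoy G ℓ B)
    (horder : ∀ i : ZMod ℓ, ∀ a ∈ B i, ∀ b ∈ B i,
      (∀ z ∈ ⋃ j, B j, z ≠ b → G.Adj a z → G.Adj b z) ∨
      (∀ z ∈ ⋃ j, B j, z ≠ a → G.Adj b z → G.Adj a z)) :
    -- (i): some a strictly dominates b w.r.t. B_{i-1}, but b does not dominate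
    -- a w.r.t. B_{i+1}
    ((∃ (i : ZMod ℓ) (a : V) (b : V), a ∈ B i ∧ b ∈ B i ∧
        (∀ z ∈ B (i - 1), G.Adj b z → G.Adj a z) ∧
        (∃ z ∈ B (i - 1), G.Adj a z ∧ ¬ G.Adj b z) ∧
        ¬ (∀ z ∈ B (i + 1), G.Adj a z → G.Adj b z)) ↔
    -- (ii): the buoy contains an induced pan
      (∃ (k : ℕ) (f : ZMod k → V) (x : V), IsHole G k f ∧
        Set.range f ⊆ ⋃ j, B j ∧ x ∈ ⋃ j, B j ∧ x ∉ Set.range f ∧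
        ∃! i : ZMod k, G.Adj x (f i))) ∧
    -- (ii) ↔ (iii): some index with neither pair of consecutive bags a clique
    ((∃ (k : ℕ) (f : ZMod k → V) (x : V), IsHole G k f ∧
        Set.range f ⊆ ⋃ j, B j ∧ x ∈ ⋃ j, B j ∧ x ∉ Set.range f ∧
        ∃! i : ZMod k, G.Adj x (f i)) ↔
      (∃ i : ZMod ℓ, ¬ G.IsClique (B (i - 1) ∪ B i) ∧
        ¬ G.IsClique (B i ∪ B (i + 1)))) := by
  refine iff_and_iff_of_imp_cycle ?_ ?_ ?_
  · rintro ⟨i, a, b, ha, hb, -, ⟨z, hz, haz, hbz⟩, hnot⟩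
    push Not at hnot
    obtain ⟨w, hw, haw, hbw⟩ := hnot
    exact hB.exists_pan_of_not_dominates horder ha hb hz hw haz hbz haw hbw
  · rintro ⟨k, f, x, hf, hfB, hxB, hxf, hx⟩
    exact hB.exists_not_isClique_of_pan hf hfB hxB hxf hx
  · rintro ⟨i, hpred, hsucc⟩
    exact ⟨i, hB.exists_dominating_pair horder hpred hsucc⟩

theorem stmt_17 {V : Type*} (G : SimpleGraph V)
    (ℓ : ℕ) (hodd : Odd ℓ) (B : ZMod ℓ → Set V) (hB : IsBuoy G ℓ B)
    (horder : ∀ i : ZMod ℓ, ∀ a ∈ B i, ∀ b ∈ B i,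
      (∀ z ∈ ⋃ j, B j, z ≠ b → G.Adj a z → G.Adj b z) ∨
      (∀ z ∈ ⋃ j, B j, z ≠ a → G.Adj b z → G.Adj a z)) :
    -- (i): some a strictly dominates b w.r.t. B_{i-1}, but b does not dominate
    -- a w.r.t. B_{i+1}
    ((∃ (i : ZMod ℓ) (a : V) (b : V), a ∈ B i ∧ b ∈ B i ∧
        (∀ z ∈ B (i - 1), G.Adj b z → G.Adj a z) ∧
        (∃ z ∈ B (i - 1), G.Adj a z ∧ ¬ G.Adj b z) ∧
        ¬ (∀ z ∈ B (i + 1), G.Adj a z → G.Adj b z)) ↔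
    -- (ii): the buoy contains an induced pan
      (∃ (k : ℕ) (f : ZMod k → V) (x : V), IsHole G k f ∧
        Set.range f ⊆ ⋃ j, B j ∧ x ∈ ⋃ j, B j ∧ x ∉ Set.range f ∧
        ∃! i : ZMod k, G.Adj x (f i))) ∧
    -- (ii) ↔ (iii): some index with neither pair of consecutive bags a clique
    ((∃ (k : ℕ) (f : ZMod k → V) (x : V), IsHole G k f ∧
        Set.range f ⊆ ⋃ j, B j ∧ x ∈ ⋃ j, B j ∧ x ∉ Set.range f ∧
        ∃! i : ZMod k, G.Adj x (f i)) ↔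
      (∃ i : ZMod ℓ, ¬ G.IsClique (B (i - 1) ∪ B i) ∧
        ¬ G.IsClique (B i ∪ B (i + 1)))) :=
  stmt_17_general G ℓ B hB horder
end

section
/- If A is a maximal atom of a graph G, then for every vertex x of G not in A, the set of neighbors of x in A is either empty or induces a clique. -/
/-- S is a clique cutset of H: it induces a clique and its removal
disconnects two vertices that were connected in H. -/
def IsCliqueCutset {W : Type*} (H : SimpleGraph W) (S : Set W) : Prop :=
  H.IsClique S ∧ ∃ u v : ↥(Sᶜ), H.Reachable ↑u ↑v ∧ ¬ (H.induce Sᶜ).Reachable u v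

/-- A induces an atom of G: a connected induced subgraph without a clique
cutset. -/
def IsGraphAtom {W : Type*} (G : SimpleGraph W) (A : Set W) : Prop :=
  (G.induce A).Connected ∧ ∀ S : Set ↥A, ¬ IsCliqueCutset (G.induce A) S

/-- A is a maximal atom of G: every induced subgraph of G containing A
either has a clique cutset or has A as one of its connected components. -/
def IsMaximalAtom {W : Type*} (G : SimpleGraph W) (A : Set W) : Prop :=
  IsGraphAtom G A ∧ ∀ H : Set W, A ⊆ H →
    (∃ S : Set ↥H, IsCliqueCutset (G.induce H) S) ∨
    (∀ a ∈ A, ∀ b ∈ H, G.Adj a b → b ∈ A)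

section Aux

variable {V : Type*} (G : SimpleGraph V) {A H : Set V} (hAH : A ⊆ H) (S : Set ↥H)

/-- pullback of `S` to `A` -/
def pbS : Set ↥A := {b : ↥A | (⟨↑b, hAH b.2⟩ : ↥H) ∈ S}

lemma pbS_compl {b : ↥A} (hb : b ∈ (pbS hAH S)ᶜ) : (⟨↑b, hAH b.2⟩ : ↥H) ∈ Sᶜ := hb

lemma pbS_of_compl (w : ↥(Sᶜ)) (hw : ((w : ↥H) : V) ∈ A) :
    (⟨↑↑w, hw⟩ : ↥A) ∉ pbS hAH S :=
  fun h => w.2 ((Subtype.ext rfl : (⟨↑↑w, hAH hw⟩ : ↥H) = ↑w) ▸ h)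

/-- lifting reachability from the doubly-induced subgraph on `A` to the one on `H` -/
lemma lift_reach {p q : ↥((pbS hAH S)ᶜ)}
    (h : ((G.induce A).induce (pbS hAH S)ᶜ).Reachable p q) :
    ((G.induce H).induce Sᶜ).Reachable ⟨⟨p.1.1, hAH p.1.2⟩, pbS_compl hAH S p.2⟩
      ⟨⟨q.1.1, hAH q.1.2⟩, pbS_compl hAH S q.2⟩ := by
  let f : ((G.induce A).induce (pbS hAH S)ᶜ) →g ((G.induce H).induce Sᶜ) :=
    { toFun := fun r => ⟨⟨r.1.1, hAH r.1.2⟩, pbS_compl hAH S r.2⟩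
      map_rel' := fun {a b} hab => hab }
  exact h.map f

lemma pbS_clique (hclique : (G.induce H).IsClique S) :
    (G.induce A).IsClique (pbS hAH S) := by
  intro a ha b hb hne
  exact hclique ha hb (by simp [Subtype.ext_iff, Subtype.ext_iff.not.mp hne])

/-- if `A` is an atom and `S` is a clique in `G.induce H`, then any two vertices of
`A` outside `S` are reachable avoiding `S`. -/
lemma atom_reach (hA : IsGraphAtom G A) (hclique : (G.induce H).IsClique S)
    (p q : ↥((pbS hAH S)ᶜ)) :
    ((G.induce A).induce (pbS hAH S)ᶜ).Reachable p q := by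
  by_contra hnr
  exact hA.2 (pbS hAH S) ⟨pbS_clique G hAH S hclique, p, q,
    hA.1.preconnected _ _, hnr⟩

/-- key lemma: if the cutset separates `x` from a vertex of `A`, every neighbor of `x`
in `A` is in `S`. -/
lemma key (hA : IsGraphAtom G A) (x : V) (hAH' : A ⊆ insert x A)
    (S : Set ↥(insert x A)) (hclique : (G.induce (insert x A)).IsClique S)
    (u v : ↥(Sᶜ))
    (hnr : ¬ ((G.induce (insert x A)).induce Sᶜ).Reachable u v)
    (hu : ((u : ↥(insert x A)) : V) = x) (hv : ((v : ↥(insert x A)) : V) ∈ A) :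
    ∀ a, ∀ ha : a ∈ A, G.Adj x a →
      (⟨a, Set.mem_insert_of_mem x ha⟩ : ↥(insert x A)) ∈ S := by
  intro a ha hadj
  by_contra hS
  have hS' : (⟨a, ha⟩ : ↥A) ∉ pbS hAH' S := hS
  set p : ↥((pbS hAH' S)ᶜ) := ⟨⟨a, ha⟩, hS'⟩ with hp
  set q : ↥((pbS hAH' S)ᶜ) := ⟨⟨_, hv⟩, pbS_of_compl hAH' S v hv⟩ with hq
  have hr := lift_reach G hAH' S (atom_reach G hAH' S hA hclique p q)
  have hadj' : ((G.induce (insert x A)).induce Sᶜ).Adj u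
      ⟨⟨p.1.1, hAH' p.1.2⟩, pbS_compl hAH' S p.2⟩ := by
    have : G.Adj ((u : ↥(insert x A)) : V) a := by rw [hu]; exact hadj
    exact this
  have hqv : (⟨⟨q.1.1, hAH' q.1.2⟩, pbS_compl hAH' S q.2⟩ : ↥(Sᶜ)) = v := by
    apply Subtype.ext; apply Subtype.ext; rfl
  rw [hqv] at hr
  exact hnr (hadj'.reachable.trans hr)

lemma both_in_A (hA : IsGraphAtom G A) (x : V) (hAH' : A ⊆ insert x A)
    (S : Set ↥(insert x A)) (hclique : (G.induce (insert x A)).IsClique S)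
    (u v : ↥(Sᶜ))
    (hnr : ¬ ((G.induce (insert x A)).induce Sᶜ).Reachable u v)
    (hu : ((u : ↥(insert x A)) : V) ∈ A) (hv : ((v : ↥(insert x A)) : V) ∈ A) :
    False := by
  have hr := lift_reach G hAH' S
    (atom_reach G hAH' S hA hclique ⟨⟨_, hu⟩, pbS_of_compl hAH' S u hu⟩
      ⟨⟨_, hv⟩, pbS_of_compl hAH' S v hv⟩)
  have h1 : (⟨⟨_, hAH' hu⟩, pbS_compl hAH' S (pbS_of_compl hAH' S u hu)⟩ : ↥(Sᶜ)) = u := by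
    apply Subtype.ext; apply Subtype.ext; rfl
  have h2 : (⟨⟨_, hAH' hv⟩, pbS_compl hAH' S (pbS_of_compl hAH' S v hv)⟩ : ↥(Sᶜ)) = v := by
    apply Subtype.ext; apply Subtype.ext; rfl
  rw [h1, h2] at hr
  exact hnr hr

end Aux

theorem stmt_18 {V : Type*} (G : SimpleGraph V) (A : Set V)
    (hA : IsMaximalAtom G A) :
    ∀ x : V, x ∉ A → G.IsClique {a | a ∈ A ∧ G.Adj x a} := by
  intro x hx
  have hAH' : A ⊆ insert x A := Set.subset_insert x A
  rcases hA.2 (insert x A) hAH' with ⟨S, hclique, u, v, hruv, hnr⟩ | habs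
  · have hmemS : ∀ a, ∀ ha : a ∈ A, G.Adj x a →
        (⟨a, Set.mem_insert_of_mem x ha⟩ : ↥(insert x A)) ∈ S := by
      rcases Set.mem_insert_iff.mp (u : ↥(insert x A)).2 with hu | hu
      · rcases Set.mem_insert_iff.mp (v : ↥(insert x A)).2 with hv | hv
        · exfalso
          have : u = v := by
            apply Subtype.ext; apply Subtype.ext; rw [hu, hv]
          exact hnr (this ▸ SimpleGraph.Reachable.refl u)
        · exact key G hA.1 x hAH' S hclique u v hnr hu hv
      · rcases Set.mem_insert_iff.mp (v : ↥(insert x A)).2 with hv | hv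
        · exact key G hA.1 x hAH' S hclique v u (fun h => hnr h.symm) hv hu
        · exact (both_in_A G hA.1 x hAH' S hclique u v hnr hu hv).elim
    intro a ⟨haA, hax⟩ b ⟨hbA, hbx⟩ hab
    have h1 := hmemS a haA hax
    have h2 := hmemS b hbA hbx
    exact hclique h1 h2 (by simpa [Subtype.ext_iff] using hab)
  · intro a ⟨haA, hax⟩
    exact absurd (habs a haA x (Set.mem_insert x A) hax.symm) hx
end
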